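/- Define the dual projection on finite measures on $[0,M]^d$ by $P_j^*(\mu) = \sum_k (\phi_k^j, \mu)\,\delta_{x_k^j}$, using the hat-function partition of unity $\{\phi_k^j\}$ on the lattice $x_k^j = \frac{M}{j}k$. Then for probability measures $\mu^1,\mu^2$: $\|P_j^*\mu^1 - P_j^*\mu^2\|_{bLip^*} \le 2^{d+1} d\, \|\mu^1 - \mu^2\|_{bLip^*}$, where $\|\eta\|_{bLip^*} = \sup\{|(f,\eta)| : \|f\|_{bLip} \le 1\}$. -/

import Mathlib

open MeasureTheory

/-- The bounded-Lipschitz dual norm distance `‖μ - η‖_{bLip*}`: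
the supremum of `|(f,μ) - (f,η)|` over functions with `‖f‖_∞ + ‖f‖_{Lip} ≤ 1`,
the Lipschitz constant being taken with respect to the `ℓ¹` norm. -/
noncomputable def dBL (d : ℕ) (μ η : Measure (Fin d → ℝ)) : ℝ :=
  ⨆ f : {f : (Fin d → ℝ) → ℝ //
      ∃ C L : ℝ, 0 ≤ C ∧ 0 ≤ L ∧ C + L ≤ 1 ∧ (∀ x, |f x| ≤ C) ∧
        ∀ x y, |f x - f y| ≤ L * ∑ i, |x i - y i|},
    |(∫ x, f.1 x ∂μ) - ∫ x, f.1 x ∂η|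

/-- The dual hat-function projection `P_j^* μ = ∑_k (φ_k^j, μ) δ_{x_k^j}` on the
lattice `x_k^j = (M/j) k` in `[0,M]^d`. -/
noncomputable def dualProj (d j : ℕ) (M : ℝ)
    (φ : (Fin d → Fin (j + 1)) → (Fin d → ℝ) → ℝ)
    (μ : Measure (Fin d → ℝ)) : Measure (Fin d → ℝ) :=
  ∑ k : Fin d → Fin (j + 1),
    ENNReal.ofReal (∫ x, φ k x ∂μ) • Measure.dirac (fun i => (k i : ℝ) * (M / j))

/-!
By duality, `(f, P_j^* μ) = (P_j f, μ)` for the multilinear interpolant `P_j f`, so it suffices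
to bound the bounded-Lipschitz norm of `P_j f`. It is a convex combination of values of `f`,
hence `‖P_j f‖_∞ ≤ ‖f‖_∞`. Along each coordinate line it is piecewise linear, with slopes that
are averages of difference quotients of `f` between neighbouring lattice points; changing one
coordinate at a time, its `ℓ¹`-Lipschitz constant on the cube `[0,M]^d` is at most that of `f`.
Composed with the retraction onto the cube, which the measures do not see, `P_j f` becomes a
test function for `dBL μ1 μ2`. So `P_j^*` does not increase `dBL`, and `1 ≤ 2^{d+1} d`.
-/

open Finset

noncomputable def hat (t : ℝ) : ℝ := max (1 - |t|) 0

lemma hat_nonneg (t : ℝ) : 0 ≤ hat t := le_max_right _ _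

lemma hat_le_one (t : ℝ) : hat t ≤ 1 := max_le (by linarith [abs_nonneg t]) zero_le_one

lemma hat_of_abs_le {t : ℝ} (ht : |t| ≤ 1) : hat t = 1 - |t| := max_eq_left (by linarith)

lemma hat_of_one_le_abs {t : ℝ} (ht : 1 ≤ |t|) : hat t = 0 := max_eq_right (by linarith)

@[fun_prop]
lemma continuous_hat : Continuous hat :=
  (continuous_const.sub continuous_abs).max continuous_const

lemma hat_sub_of_mem_Icc {s m : ℝ} (hs : s ∈ Set.Icc m (m + 1)) :
    hat (s - m) = 1 - (s - m) ∧ hat (s - (m + 1)) = s - m := by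
  obtain ⟨h1, h2⟩ := hs
  have e1 : |s - m| = s - m := abs_of_nonneg (by linarith)
  have e2 : |s - (m + 1)| = m + 1 - s := by rw [abs_of_nonpos (by linarith)]; ring
  constructor
  · rw [hat_of_abs_le (by rw [e1]; linarith), e1]
  · rw [hat_of_abs_le (by rw [e2]; linarith), e2]
    ring

lemma hat_sub_intCast_eq_zero {s : ℝ} {m n : ℤ} (hs : s ∈ Set.Icc (m : ℝ) (m + 1))
    (h1 : n ≠ m) (h2 : n ≠ m + 1) : hat (s - n) = 0 := by
  rcases lt_or_gt_of_ne h1 with h | h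
  · have : (n : ℝ) + 1 ≤ m := by exact_mod_cast h
    exact hat_of_one_le_abs (le_abs.2 (Or.inl (by linarith [hs.1])))
  · have : (m : ℝ) + 2 ≤ n := by exact_mod_cast (show m + 2 ≤ n by omega)
    exact hat_of_one_le_abs (le_abs.2 (Or.inr (by linarith [hs.2])))

lemma sum_hat_sub_int_le_one (s : Finset ℤ) (r : ℝ) : ∑ n ∈ s, hat (r - n) ≤ 1 := by
  set m := ⌊r⌋
  have hm : r ∈ Set.Icc (m : ℝ) (m + 1) := ⟨Int.floor_le r, (Int.lt_floor_add_one r).le⟩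
  have hvanish : ∀ n ∈ s, hat (r - n) ≠ 0 → n ∈ ({m, m + 1} : Finset ℤ) := by
    intro n _ hn
    by_contra hnm
    simp only [mem_insert, mem_singleton, not_or] at hnm
    exact hn (hat_sub_intCast_eq_zero hm hnm.1 hnm.2)
  obtain ⟨h0, h1⟩ := hat_sub_of_mem_Icc hm
  calc ∑ n ∈ s, hat (r - n) = ∑ n ∈ s with n ∈ ({m, m + 1} : Finset ℤ), hat (r - n) :=
        (sum_filter_of_ne hvanish).symm
    _ ≤ ∑ n ∈ ({m, m + 1} : Finset ℤ), hat (r - n) :=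
        sum_le_sum_of_subset_of_nonneg (fun n hn => (mem_filter.1 hn).2)
          fun n _ _ => hat_nonneg _
    _ = 1 := by
        rw [sum_pair (by omega)]
        push_cast
        linarith

lemma sum_hat_sub_le_one (N : ℕ) (r : ℝ) : ∑ n : Fin (N + 1), hat (r - n) ≤ 1 := by
  simpa [Fin.sum_univ_eq_sum_range (fun n => hat (r - n))] using
    sum_hat_sub_int_le_one ((range (N + 1)).map Nat.castEmbedding) r

lemma sum_hat_sub_mul_of_mem_Icc (c : ℕ → ℝ) {N m : ℕ} (hm : m < N) {s : ℝ}
    (hs : s ∈ Set.Icc (m : ℝ) (m + 1)) :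
    ∑ n ∈ range (N + 1), hat (s - n) * c n = c m + (s - m) * (c (m + 1) - c m) := by
  obtain ⟨h0, h1⟩ := hat_sub_of_mem_Icc hs
  rw [sum_eq_add_of_mem m (m + 1) (mem_range.2 (by omega)) (mem_range.2 (by omega)) (by omega)]
  · push_cast
    rw [h0, h1]
    ring
  · rintro n - ⟨hnm, hnm'⟩
    refine mul_eq_zero_of_left ?_ _
    simpa using hat_sub_intCast_eq_zero (m := m) (n := n) (by simpa using hs) (by omega) (by omega)

lemma abs_sub_le_of_forall_Icc_nat {g : ℝ → ℝ} {K : ℝ} {N : ℕ}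
    (hcell : ∀ m < N, ∀ a ∈ Set.Icc (m : ℝ) (m + 1), ∀ b ∈ Set.Icc (m : ℝ) (m + 1),
      |g a - g b| ≤ K * |a - b|)
    {s t : ℝ} (hs : s ∈ Set.Icc 0 (N : ℝ)) (ht : t ∈ Set.Icc 0 (N : ℝ)) :
    |g s - g t| ≤ K * |s - t| := by
  wlog hst : s ≤ t generalizing s t
  · rw [abs_sub_comm, abs_sub_comm s]
    exact this ht hs (le_of_not_ge hst)
  induction N generalizing t with
  | zero =>
    obtain rfl : s = t := by simp only [CharP.cast_eq_zero, Set.mem_Icc] at hs ht; linarith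
    simp
  | succ N ih =>
    push_cast at hs ht
    by_cases htN : t ≤ N
    · exact ih (fun m hm => hcell m (by omega)) ⟨hs.1, hst.trans htN⟩ ⟨ht.1, htN⟩ hst
    by_cases hsN : (N : ℝ) ≤ s
    · exact hcell N (lt_add_one N) s ⟨hsN, hs.2⟩ t ⟨hsN.trans hst, ht.2⟩
    push Not at htN hsN
    calc |g s - g t| ≤ |g s - g N| + |g N - g t| := abs_sub_le _ _ _
      _ ≤ K * |s - N| + K * |N - t| :=
          add_le_add (ih (fun m hm => hcell m (by omega)) ⟨hs.1, hsN.le⟩ ⟨by linarith, le_rfl⟩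
              hsN.le)
            (hcell N (lt_add_one N) N ⟨le_rfl, by linarith⟩ t ⟨htN.le, ht.2⟩)
      _ = K * |s - t| := by
          rw [abs_of_nonpos (by linarith), abs_of_nonpos (by linarith),
            abs_of_nonpos (by linarith)]
          ring

/-- The sums are values of the piecewise linear interpolant of `c` at the integers. -/
lemma abs_sum_hat_sub_mul_sub_le {N : ℕ} {c : ℕ → ℝ} {K : ℝ}
    (hc : ∀ n < N, |c (n + 1) - c n| ≤ K) {s t : ℝ}
    (hs : s ∈ Set.Icc 0 (N : ℝ)) (ht : t ∈ Set.Icc 0 (N : ℝ)) :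
    |∑ n ∈ range (N + 1), hat (s - n) * c n - ∑ n ∈ range (N + 1), hat (t - n) * c n|
      ≤ K * |s - t| := by
  refine abs_sub_le_of_forall_Icc_nat (g := fun s => ∑ n ∈ range (N + 1), hat (s - n) * c n)
    (fun m hm a ha b hb => ?_) hs ht
  rw [sum_hat_sub_mul_of_mem_Icc c hm ha, sum_hat_sub_mul_of_mem_Icc c hm hb]
  calc |c m + (a - m) * (c (m + 1) - c m) - (c m + (b - m) * (c (m + 1) - c m))|
      = |a - b| * |c (m + 1) - c m| := by rw [← abs_mul]; ring_nf
    _ ≤ K * |a - b| := by rw [mul_comm]; exact mul_le_mul_of_nonneg_right (hc m hm) (abs_nonneg _)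

lemma abs_sub_le_sum_of_forall_update {ι : Type*} [Fintype ι] [DecidableEq ι]
    {S : ι → Set ℝ} {g : (ι → ℝ) → ℝ} {L : ℝ}
    (hg : ∀ x ∈ Set.univ.pi S, ∀ i, ∀ a ∈ S i,
      |g x - g (Function.update x i a)| ≤ L * |x i - a|)
    {x y : ι → ℝ} (hx : x ∈ Set.univ.pi S) (hy : y ∈ Set.univ.pi S) :
    |g x - g y| ≤ L * ∑ i, |x i - y i| := by
  suffices ∀ T : Finset ι, |g x - g (T.piecewise y x)| ≤ L * ∑ i ∈ T, |x i - y i| by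
    simpa using this univ
  intro T
  induction T using Finset.induction_on with
  | empty => simp
  | insert a T ha ih =>
    set z := T.piecewise y x
    have hza : z a = x a := T.piecewise_eq_of_notMem _ _ ha
    rw [piecewise_insert, sum_insert ha, mul_add]
    calc |g x - g (Function.update z a (y a))|
        ≤ |g x - g z| + |g z - g (Function.update z a (y a))| := abs_sub_le _ _ _
      _ ≤ L * ∑ i ∈ T, |x i - y i| + L * |x a - y a| := by
          refine add_le_add ih ?_
          rw [← hza]
          exact hg z (T.piecewise_mem_set_pi hy hx) a (y a) (hy a (Set.mem_univ a))
      _ = _ := add_comm _ _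

lemma sum_pi_prod_le_one {ι β : Type*} [Fintype ι] [DecidableEq ι] [Fintype β] {g : ι → β → ℝ}
    (h0 : ∀ i b, 0 ≤ g i b) (h1 : ∀ i, ∑ b, g i b ≤ 1) : ∑ k : ι → β, ∏ i, g i (k i) ≤ 1 := by
  rw [← Fintype.prod_sum]
  exact prod_le_one (fun i _ => sum_nonneg fun b _ => h0 i b) fun i _ => h1 i

section Interpolation

variable {ι : Type*} [Fintype ι] {N : ℕ} {h L : ℝ}

def latticePt (h : ℝ) (k : ι → Fin (N + 1)) : ι → ℝ := fun i => (k i : ℝ) * h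

noncomputable def hatBasis (h : ℝ) (k : ι → Fin (N + 1)) (x : ι → ℝ) : ℝ :=
  ∏ i, hat (x i / h - k i)

lemma hatBasis_nonneg (k : ι → Fin (N + 1)) (x : ι → ℝ) : 0 ≤ hatBasis h k x :=
  prod_nonneg fun _ _ => hat_nonneg _

lemma hatBasis_le_one (k : ι → Fin (N + 1)) (x : ι → ℝ) : hatBasis h k x ≤ 1 :=
  prod_le_one (fun _ _ => hat_nonneg _) fun _ _ => hat_le_one _

lemma continuous_hatBasis (k : ι → Fin (N + 1)) : Continuous (hatBasis h k) := by
  unfold hatBasis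
  fun_prop

lemma integrable_hatBasis {μ : Measure (ι → ℝ)} [IsFiniteMeasure μ] (k : ι → Fin (N + 1)) :
    Integrable (hatBasis h k) μ :=
  Integrable.of_bound (continuous_hatBasis k).aestronglyMeasurable 1
    (ae_of_all _ fun x => by
      rw [Real.norm_eq_abs, abs_of_nonneg (hatBasis_nonneg k x)]
      exact hatBasis_le_one k x)

variable [DecidableEq ι]

/-- The paper's `P_j f`, for `N = j` and `h = M / j`. -/
noncomputable def interp (N : ℕ) (h : ℝ) (f : (ι → ℝ) → ℝ) (x : ι → ℝ) : ℝ :=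
  ∑ k : ι → Fin (N + 1), f (latticePt h k) * hatBasis h k x

lemma sum_hatBasis_le_one (x : ι → ℝ) :
    ∑ k : ι → Fin (N + 1), hatBasis h k x ≤ 1 :=
  sum_pi_prod_le_one (g := fun i (b : Fin (N + 1)) => hat (x i / h - b)) (fun _ _ => hat_nonneg _)
    fun i => sum_hat_sub_le_one N (x i / h)

lemma abs_interp_le {f : (ι → ℝ) → ℝ} {C : ℝ} (hC : 0 ≤ C) (hf : ∀ x, |f x| ≤ C)
    (x : ι → ℝ) : |interp N h f x| ≤ C := by
  calc |interp N h f x| ≤ ∑ k : ι → Fin (N + 1), |f (latticePt h k)| * hatBasis h k x := by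
        refine (abs_sum_le_sum_abs _ _).trans_eq (sum_congr rfl fun k _ => ?_)
        rw [abs_mul, abs_of_nonneg (hatBasis_nonneg k x)]
    _ ≤ ∑ k : ι → Fin (N + 1), C * hatBasis h k x :=
        sum_le_sum fun k _ => mul_le_mul_of_nonneg_right (hf _) (hatBasis_nonneg k x)
    _ ≤ C := by
        rw [← mul_sum]
        exact mul_le_of_le_one_right hC (sum_hatBasis_le_one x)

noncomputable def sliceWeight (h : ℝ) (i : ι) (z : ι → ℝ) (k : ι → Fin (N + 1)) : ℝ :=
  ∏ l ∈ univ.erase i, hat (z l / h - k l)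

lemma sliceWeight_nonneg (i : ι) (z : ι → ℝ) (k : ι → Fin (N + 1)) : 0 ≤ sliceWeight h i z k :=
  prod_nonneg fun _ _ => hat_nonneg _

lemma hatBasis_update (k : ι → Fin (N + 1)) (i : ι) (z : ι → ℝ) (s : ℝ) :
    hatBasis h k (Function.update z i s) = hat (s / h - k i) * sliceWeight h i z k := by
  rw [hatBasis, ← mul_prod_erase univ _ (mem_univ i), Function.update_self, sliceWeight]
  congr 1
  exact prod_congr rfl fun l hl => by rw [Function.update_of_ne (ne_of_mem_erase hl)]

lemma sliceWeight_update (i : ι) (z : ι → ℝ) (k : ι → Fin (N + 1)) (b : Fin (N + 1)) :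
    sliceWeight h i z (Function.update k i b) = sliceWeight h i z k :=
  prod_congr rfl fun l hl => by rw [Function.update_of_ne (ne_of_mem_erase hl)]

lemma sum_sliceWeight_le_one (i : ι) (z : ι → ℝ) (n : ℕ) :
    ∑ k : ι → Fin (N + 1) with (k i : ℕ) = n, sliceWeight h i z k ≤ 1 := by
  -- the constraint `k i = n` becomes a Kronecker factor in direction `i`, so the sum factorizes
  let g : ι → Fin (N + 1) → ℝ := fun l b =>
    if l = i then (if (b : ℕ) = n then 1 else 0) else hat (z l / h - b)
  have hg : ∀ k : ι → Fin (N + 1),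
      ∏ l, g l (k l) = if (k i : ℕ) = n then sliceWeight h i z k else 0 := by
    intro k
    rw [← mul_prod_erase univ _ (mem_univ i), sliceWeight,
      prod_congr rfl fun l hl => if_neg (ne_of_mem_erase hl)]
    simp only [g, if_pos rfl, ite_mul, one_mul, zero_mul]
  calc ∑ k : ι → Fin (N + 1) with (k i : ℕ) = n, sliceWeight h i z k
      = ∑ k : ι → Fin (N + 1), ∏ l, g l (k l) := by rw [sum_filter]; simp only [hg]
    _ ≤ 1 := by
        refine sum_pi_prod_le_one (fun l b => ?_) fun l => ?_
        · simp only [g]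
          split_ifs <;> simp [hat_nonneg]
        · by_cases hl : l = i
          · simp only [g, if_pos hl]
            rw [Fin.sum_univ_eq_sum_range (fun b => if b = n then (1 : ℝ) else 0), sum_ite_eq']
            split_ifs <;> norm_num
          · simp only [g, if_neg hl]
            exact sum_hat_sub_le_one N _

/-- The value of the interpolant at the `n`-th lattice point of the line through `z` in
direction `i`. -/
noncomputable def sliceSum (N : ℕ) (h : ℝ) (f : (ι → ℝ) → ℝ) (i : ι) (z : ι → ℝ) (n : ℕ) : ℝ :=
  ∑ k : ι → Fin (N + 1) with (k i : ℕ) = n, f (latticePt h k) * sliceWeight h i z k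

lemma interp_update (f : (ι → ℝ) → ℝ) (i : ι) (z : ι → ℝ) (s : ℝ) :
    interp N h f (Function.update z i s)
      = ∑ n ∈ range (N + 1), hat (s / h - n) * sliceSum N h f i z n := by
  rw [interp, ← sum_fiberwise_of_maps_to (g := fun k : ι → Fin (N + 1) => (k i : ℕ))
    (t := range (N + 1)) fun k _ => mem_range.2 (k i).isLt]
  refine sum_congr rfl fun n _ => ?_
  rw [sliceSum, mul_sum]
  refine sum_congr rfl fun k hk => ?_
  rw [hatBasis_update, (mem_filter.1 hk).2]
  ring

lemma sum_filter_apply_succ_eq {M : Type*} [AddCommMonoid M] (F : (ι → Fin (N + 1)) → M)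
    (i : ι) {n : ℕ} (hn : n < N) :
    ∑ k : ι → Fin (N + 1) with (k i : ℕ) = n + 1, F k
      = ∑ k : ι → Fin (N + 1) with (k i : ℕ) = n,
          F (Function.update k i ⟨n + 1, by omega⟩) := by
  refine sum_nbij' (Function.update · i ⟨n, by omega⟩) (Function.update · i ⟨n + 1, by omega⟩)
    (by simp) (by simp) (fun k hk => ?_) (fun k hk => ?_) (fun k hk => ?_)
  all_goals
    simp only [mem_filter, mem_univ, true_and] at hk
    rw [Function.update_idem]
  · exact Function.update_eq_self_iff.2 (Fin.ext hk.symm)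
  · exact Function.update_eq_self_iff.2 (Fin.ext hk.symm)
  · rw [Function.update_eq_self_iff.2 (Fin.ext hk.symm : (⟨n + 1, _⟩ : Fin (N + 1)) = k i)]

lemma abs_sliceSum_succ_sub_le (hh : 0 ≤ h) (hL : 0 ≤ L) {f : (ι → ℝ) → ℝ}
    (hf : ∀ x y, |f x - f y| ≤ L * ∑ i, |x i - y i|) (i : ι) (z : ι → ℝ) {n : ℕ} (hn : n < N) :
    |sliceSum N h f i z (n + 1) - sliceSum N h f i z n| ≤ L * h := by
  have hstep : ∀ k : ι → Fin (N + 1), (k i : ℕ) = n →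
      |f (latticePt h (Function.update k i ⟨n + 1, by omega⟩)) - f (latticePt h k)| ≤ L * h := by
    intro k hk
    refine (hf _ _).trans_eq (congrArg (L * ·) ?_)
    rw [Fintype.sum_eq_single i fun l hl => by simp [latticePt, Function.update_of_ne hl]]
    simp only [latticePt, Function.update_self, hk]
    push_cast
    rw [← sub_mul, add_sub_cancel_left, one_mul, abs_of_nonneg hh]
  rw [sliceSum, sliceSum, sum_filter_apply_succ_eq _ i hn, ← sum_sub_distrib]
  calc |∑ k : ι → Fin (N + 1) with (k i : ℕ) = n,
        (f (latticePt h (Function.update k i ⟨n + 1, by omega⟩))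
          * sliceWeight h i z (Function.update k i ⟨n + 1, by omega⟩)
          - f (latticePt h k) * sliceWeight h i z k)|
      ≤ ∑ k : ι → Fin (N + 1) with (k i : ℕ) = n, L * h * sliceWeight h i z k := by
        refine (abs_sum_le_sum_abs _ _).trans (sum_le_sum fun k hk => ?_)
        rw [sliceWeight_update, ← sub_mul, abs_mul, abs_of_nonneg (sliceWeight_nonneg i z k)]
        exact mul_le_mul_of_nonneg_right (hstep k (mem_filter.1 hk).2) (sliceWeight_nonneg i z k)
    _ ≤ L * h := by
        rw [← mul_sum]
        exact mul_le_of_le_one_right (by positivity) (sum_sliceWeight_le_one i z n)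

lemma abs_interp_update_sub_le (hh : 0 < h) (hL : 0 ≤ L) {f : (ι → ℝ) → ℝ}
    (hf : ∀ x y, |f x - f y| ≤ L * ∑ i, |x i - y i|) (i : ι) (z : ι → ℝ) {s t : ℝ}
    (hs : s ∈ Set.Icc 0 (N * h)) (ht : t ∈ Set.Icc 0 (N * h)) :
    |interp N h f (Function.update z i s) - interp N h f (Function.update z i t)|
      ≤ L * |s - t| := by
  have hscale : ∀ {s : ℝ}, s ∈ Set.Icc 0 (N * h) → s / h ∈ Set.Icc 0 (N : ℝ) := fun hs =>
    ⟨div_nonneg hs.1 hh.le, (div_le_iff₀ hh).2 hs.2⟩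
  rw [interp_update, interp_update]
  calc _ ≤ L * h * |s / h - t / h| :=
        abs_sum_hat_sub_mul_sub_le (fun n hn => abs_sliceSum_succ_sub_le hh.le hL hf i z hn)
          (hscale hs) (hscale ht)
    _ = L * |s - t| := by
        rw [← sub_div, abs_div, abs_of_pos hh]
        field_simp

lemma abs_interp_sub_le (hh : 0 < h) (hL : 0 ≤ L) {f : (ι → ℝ) → ℝ}
    (hf : ∀ x y, |f x - f y| ≤ L * ∑ i, |x i - y i|) {x y : ι → ℝ}
    (hx : ∀ i, x i ∈ Set.Icc 0 (N * h)) (hy : ∀ i, y i ∈ Set.Icc 0 (N * h)) :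
    |interp N h f x - interp N h f y| ≤ L * ∑ i, |x i - y i| := by
  refine abs_sub_le_sum_of_forall_update (S := fun _ => Set.Icc 0 (N * h))
    (fun z hz i a ha => ?_) (fun i _ => hx i) (fun i _ => hy i)
  simpa only [Function.update_eq_self] using
    abs_interp_update_sub_le hh hL hf i z (hz i (Set.mem_univ i)) ha

end Interpolation

/-- The index set of the supremum defining `dBL`. -/
def bLipUnitBall (ι : Type*) [Fintype ι] : Set ((ι → ℝ) → ℝ) :=
  {f | ∃ C L : ℝ, 0 ≤ C ∧ 0 ≤ L ∧ C + L ≤ 1 ∧ (∀ x, |f x| ≤ C) ∧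
    ∀ x y, |f x - f y| ≤ L * ∑ i, |x i - y i|}

lemma exists_mem_bLipUnitBall_eq_interp {ι : Type*} [Fintype ι] [DecidableEq ι] {N : ℕ} {h : ℝ}
    (hh : 0 < h) {f : (ι → ℝ) → ℝ} (hf : f ∈ bLipUnitBall ι) :
    ∃ g ∈ bLipUnitBall ι, ∀ x, (∀ i, x i ∈ Set.Icc 0 (N * h)) → g x = interp N h f x := by
  obtain ⟨C, L, hC, hL, hCL, hfC, hfL⟩ := hf
  have hNh : 0 ≤ N * h := by positivity
  let clamp : (ι → ℝ) → ι → ℝ := fun x i => Set.projIcc 0 (N * h) hNh (x i)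
  refine ⟨interp N h f ∘ clamp, ⟨C, L, hC, hL, hCL, fun x => abs_interp_le hC hfC _,
    fun x y => ?_⟩, fun x hx => ?_⟩
  · refine (abs_interp_sub_le hh hL hfL (fun i => Subtype.prop _) fun i => Subtype.prop _).trans ?_
    exact mul_le_mul_of_nonneg_left (sum_le_sum fun i _ => Set.abs_projIcc_sub_projIcc hNh) hL
  · simp only [Function.comp_apply, clamp, Set.projIcc_of_mem hNh (hx _)]

lemma abs_integral_sub_le_dBL {d : ℕ} {μ η : Measure (Fin d → ℝ)} [IsFiniteMeasure μ]
    [IsFiniteMeasure η] {f : (Fin d → ℝ) → ℝ} (hf : f ∈ bLipUnitBall (Fin d)) :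
    |(∫ x, f x ∂μ) - ∫ x, f x ∂η| ≤ dBL d μ η := by
  refine le_ciSup (f := fun g : bLipUnitBall (Fin d) => |(∫ x, g.1 x ∂μ) - ∫ x, g.1 x ∂η|)
    ⟨μ.real Set.univ + η.real Set.univ, ?_⟩ ⟨f, hf⟩
  rintro _ ⟨⟨g, C, L, hC, hL, hCL, hgC, -⟩, rfl⟩
  have hμ : |∫ x, g x ∂μ| ≤ C * μ.real Set.univ :=
    norm_integral_le_of_norm_le_const (ae_of_all _ fun x => (Real.norm_eq_abs _).trans_le (hgC x))
  have hη : |∫ x, g x ∂η| ≤ C * η.real Set.univ :=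
    norm_integral_le_of_norm_le_const (ae_of_all _ fun x => (Real.norm_eq_abs _).trans_le (hgC x))
  have hC1 : C ≤ 1 := by linarith
  calc _ ≤ |∫ x, g x ∂μ| + |∫ x, g x ∂η| := abs_sub _ _
    _ ≤ _ := by
        nlinarith [measureReal_nonneg (μ := μ) (s := Set.univ),
          measureReal_nonneg (μ := η) (s := Set.univ)]

lemma dBL_le {d : ℕ} {μ η : Measure (Fin d → ℝ)} {B : ℝ}
    (hB : ∀ f ∈ bLipUnitBall (Fin d), |(∫ x, f x ∂μ) - ∫ x, f x ∂η| ≤ B) : dBL d μ η ≤ B :=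
  @ciSup_le _ _ _ ⟨⟨0, 0, 0, le_rfl, le_rfl, by norm_num, fun _ => by simp, fun _ _ => by simp⟩⟩
    _ _ fun f => hB f.1 f.2

lemma dBL_nonneg (d : ℕ) (μ η : Measure (Fin d → ℝ)) : 0 ≤ dBL d μ η :=
  Real.iSup_nonneg fun _ => abs_nonneg _

/-- `(f, P_j^* μ) = (P_j f, μ)`. -/
lemma integral_dualProj_hatBasis {d j : ℕ} {M : ℝ} {μ : Measure (Fin d → ℝ)} [IsFiniteMeasure μ]
    (f : (Fin d → ℝ) → ℝ) :
    ∫ x, f x ∂dualProj d j M (hatBasis (M / j)) μ = ∫ x, interp j (M / j) f x ∂μ := by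
  rw [dualProj, integral_finsetSum_measure fun k _ =>
      (integrable_dirac (by simp)).smul_measure ENNReal.ofReal_ne_top]
  simp only [interp]
  rw [integral_finsetSum _ fun k _ => (integrable_hatBasis k).const_mul _]
  refine sum_congr rfl fun k _ => ?_
  rw [integral_smul_measure, integral_dirac,
    ENNReal.toReal_ofReal (integral_nonneg (hatBasis_nonneg k)), smul_eq_mul, integral_const_mul,
    mul_comm]
  rfl

/-- `‖P_j^* μ1 - P_j^* μ2‖_{bLip*} ≤ 2^{d+1} d ‖μ1 - μ2‖_{bLip*}` for probability
measures `μ1, μ2` on `[0,M]^d`. -/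
theorem stmt12
    (d j : ℕ) (hd : 0 < d) (hj : 0 < j) (M : ℝ) (hM : 0 < M)
    (χ : ℝ → ℝ) (hχ : ∀ t, χ t = max (1 - |t|) 0)
    (φ : (Fin d → Fin (j + 1)) → (Fin d → ℝ) → ℝ)
    (hφ : ∀ k x, φ k x = ∏ i, χ ((j / M) * (x i - (k i : ℝ) * (M / j))))
    (μ1 μ2 : Measure (Fin d → ℝ))
    [IsProbabilityMeasure μ1] [IsProbabilityMeasure μ2]
    (hμ1 : μ1 {x | ¬ ∀ i, x i ∈ Set.Icc (0:ℝ) M} = 0)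
    (hμ2 : μ2 {x | ¬ ∀ i, x i ∈ Set.Icc (0:ℝ) M} = 0) :
    dBL d (dualProj d j M φ μ1) (dualProj d j M φ μ2)
      ≤ 2 ^ (d + 1) * d * dBL d μ1 μ2 := by
  obtain rfl : χ = hat := funext hχ
  have hh : 0 < M / j := by positivity
  obtain rfl : φ = hatBasis (M / j) := by
    funext k x
    rw [hφ, hatBasis]
    refine prod_congr rfl fun i _ => congrArg hat ?_
    field_simp
  have hbox : (j : ℝ) * (M / j) = M := by field_simp
  have hD : (1 : ℝ) ≤ 2 ^ (d + 1) * d :=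
    one_le_mul_of_one_le_of_one_le (one_le_pow₀ one_le_two) (by exact_mod_cast hd)
  refine (dBL_le fun f hf => ?_).trans (le_mul_of_one_le_left (dBL_nonneg d μ1 μ2) hD)
  obtain ⟨g, hg, hgf⟩ := exists_mem_bLipUnitBall_eq_interp (N := j) hh hf
  rw [hbox] at hgf
  have hae : ∀ μ : Measure (Fin d → ℝ), μ {x | ¬ ∀ i, x i ∈ Set.Icc (0:ℝ) M} = 0 →
      interp j (M / j) f =ᵐ[μ] g := fun μ hμ =>
    (ae_iff.2 hμ).mono fun x hx => (hgf x hx).symm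
  rw [integral_dualProj_hatBasis, integral_dualProj_hatBasis, integral_congr_ae (hae μ1 hμ1),
    integral_congr_ae (hae μ2 hμ2)]
  exact abs_integral_sub_le_dBL hg
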